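/- Let K ≥ 2 be an integer and let R > 1 and ζ > 1 be reals. Set η_H := 1/(R^K + R^{-K}), a := ζR + ζ⁻¹R⁻¹, b := R + R⁻¹, and define F : ℝ → ℝ by F(ω) := ((2cos ω − a)/(2cos ω − b))·(1 − 2η_H cos(Kω)). If K² < (1/η_H)·((a − b)(1 − 2η_H))/((a − 2cos(π/K))·(b − 2cos(π/K))), then the supremum of F over [0, 2π) equals ((a − 2)/(b − 2))·(1 − 2η_H), and this value is attained at ω = 0. -/

import Mathlib

/-!
Write `c = cos ω`, `d = cos (Kω)` and `c₀ = cos (π / K)`. Clearing the (positive) denominators,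
`F 0 - F ω` has the sign of `(1 - 2η)(a - b)(1 - c) - η(1 - d)(a - 2c)(b - 2)`. The estimate
`1 - cos (Kx) ≤ K²(1 - cos x)` (from `|sin (Kx)| ≤ K |sin x|`) gives
`(1 - d)(a - 2c)(b - 2) ≤ K²(1 - c)(a - 2c₀)(b - 2c₀)`: directly when `c ≥ c₀`, and when `c < c₀`
through `1 - d ≤ 2 = 1 - cos (K · π/K) ≤ K²(1 - c₀)`. Proposition 1's condition on `K²` is exactly
what makes the right-hand side at most `(1 - 2η)(a - b)(1 - c) / η`.
-/

open Real

theorem two_lt_add_inv {x : ℝ} (hx : 1 < x) : 2 < x + x⁻¹ := by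
  have hx0 : x ≠ 0 := by positivity
  have hx1 : 0 < x - 1 := by linarith
  have : x + x⁻¹ - 2 = (x - 1) ^ 2 / x := by field_simp; ring
  have : 0 < (x - 1) ^ 2 / x := by positivity
  linarith

theorem abs_sin_nat_mul_le (n : ℕ) (x : ℝ) : |sin (n * x)| ≤ n * |sin x| := by
  induction n with
  | zero => simp
  | succ n ih =>
    calc |sin ((n + 1 : ℕ) * x)| = |sin (n * x) * cos x + cos (n * x) * sin x| := by
          push_cast; rw [add_mul, one_mul, sin_add]
      _ ≤ |sin (n * x)| * |cos x| + |cos (n * x)| * |sin x| := by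
          simpa only [abs_mul] using abs_add_le (sin (n * x) * cos x) (cos (n * x) * sin x)
      _ ≤ n * |sin x| * 1 + 1 * |sin x| := by
          gcongr
          exacts [abs_cos_le_one x, abs_cos_le_one _]
      _ = (n + 1 : ℕ) * |sin x| := by push_cast; ring

theorem one_sub_cos_nat_mul_le (n : ℕ) (x : ℝ) : 1 - cos (n * x) ≤ n ^ 2 * (1 - cos x) := by
  have half (y : ℝ) : 1 - cos y = 2 * |sin (y / 2)| ^ 2 := by
    rw [sq_abs, sin_sq_eq_half_sub]; ring_nf
  have := pow_le_pow_left₀ (abs_nonneg _) (abs_sin_nat_mul_le n (x / 2)) 2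
  rw [half, half, mul_div_assoc, mul_pow] at *
  linarith

theorem two_le_sq_mul_one_sub_cos_pi_div {n : ℕ} (hn : n ≠ 0) :
    2 ≤ n ^ 2 * (1 - cos (π / n)) := by
  have := one_sub_cos_nat_mul_le n (π / n)
  rwa [mul_div_cancel₀ _ (Nat.cast_ne_zero.2 hn), cos_pi, sub_neg_eq_add, one_add_one_eq_two]
    at this

theorem one_sub_cos_nat_mul_mul_le (n : ℕ) {a b : ℝ} (ha : 2 ≤ a) (hb : 2 ≤ b) (ω : ℝ) :
    (1 - cos (n * ω)) * ((a - 2 * cos ω) * (b - 2)) ≤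
      n ^ 2 * (1 - cos ω) * ((a - 2 * cos (π / n)) * (b - 2 * cos (π / n))) := by
  rcases eq_or_ne n 0 with rfl | hn
  · simp
  set c := cos ω
  set c₀ := cos (π / n)
  have hc : 0 ≤ 1 - c := sub_nonneg.2 (cos_le_one ω)
  have hc₀ : c₀ ≤ 1 := cos_le_one _
  have hac : 0 ≤ a - 2 * c := by linarith
  have hac₀ : 0 ≤ a - 2 * c₀ := by linarith
  have hb2 : 0 ≤ b - 2 := by linarith
  rcases le_or_gt c₀ c with hc₀c | hcc₀
  · calc _ ≤ n ^ 2 * (1 - c) * ((a - 2 * c) * (b - 2)) := by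
          gcongr
          exact one_sub_cos_nat_mul_le n ω
      _ ≤ _ := by gcongr; linarith
  · have hcross : (1 - c₀) * (a - 2 * c) ≤ (1 - c) * (a - 2 * c₀) := by
      nlinarith [mul_nonneg (sub_nonneg.2 ha) (sub_nonneg.2 hcc₀.le)]
    calc _ ≤ 2 * ((a - 2 * c) * (b - 2)) := by
          gcongr
          linarith [neg_one_le_cos (n * ω)]
      _ ≤ n ^ 2 * (1 - c₀) * ((a - 2 * c) * (b - 2)) := by
          gcongr
          exact two_le_sq_mul_one_sub_cos_pi_div hn
      _ = n ^ 2 * ((1 - c₀) * (a - 2 * c)) * (b - 2) := by ring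
      _ ≤ n ^ 2 * ((1 - c) * (a - 2 * c₀)) * (b - 2 * c₀) := by
          gcongr
          linarith
      _ = _ := by ring

theorem div_mul_one_sub_cos_le {n : ℕ} {a b η : ℝ} (ha : 2 ≤ a) (hb : 2 < b) (hη : 0 ≤ η)
    (hcond : η * (n ^ 2 * ((a - 2 * cos (π / n)) * (b - 2 * cos (π / n)))) ≤
      (a - b) * (1 - 2 * η)) (ω : ℝ) :
    (2 * cos ω - a) / (2 * cos ω - b) * (1 - 2 * η * cos (n * ω)) ≤
      (a - 2) / (b - 2) * (1 - 2 * η) := by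
  set c := cos ω
  set d := cos (n * ω)
  have hc : 0 ≤ 1 - c := sub_nonneg.2 (cos_le_one ω)
  have key : η * ((1 - d) * ((a - 2 * c) * (b - 2))) ≤ (a - b) * (1 - 2 * η) * (1 - c) :=
    calc _ ≤ η * (n ^ 2 * (1 - c) * ((a - 2 * cos (π / n)) * (b - 2 * cos (π / n)))) :=
          mul_le_mul_of_nonneg_left (one_sub_cos_nat_mul_mul_le n ha hb.le ω) hη
      _ = η * (n ^ 2 * ((a - 2 * cos (π / n)) * (b - 2 * cos (π / n)))) * (1 - c) := by ring
      _ ≤ _ := by gcongr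
  rw [← neg_div_neg_eq, div_mul_eq_mul_div, div_mul_eq_mul_div,
    div_le_div_iff₀ (by linarith) (by linarith)]
  linear_combination 2 * key

theorem stmt_1_general (K : ℕ) (R ζ : ℝ) (hR : 1 < R) (hζ : 1 < ζ)
    (ηH a b : ℝ)
    (hηH : ηH = 1 / (R ^ K + R⁻¹ ^ K))
    (ha : a = ζ * R + ζ⁻¹ * R⁻¹)
    (hb : b = R + R⁻¹)
    (F : ℝ → ℝ)
    (hF : ∀ ω : ℝ, F ω =
      ((2 * Real.cos ω - a) / (2 * Real.cos ω - b)) * (1 - 2 * ηH * Real.cos (K * ω)))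
    (hcond : (K : ℝ) ^ 2 <
      (1 / ηH) * ((a - b) * (1 - 2 * ηH)) /
        ((a - 2 * Real.cos (π / K)) * (b - 2 * Real.cos (π / K)))) :
    sSup (F '' Set.Ico (0 : ℝ) (2 * π)) = ((a - 2) / (b - 2)) * (1 - 2 * ηH) ∧
      F 0 = ((a - 2) / (b - 2)) * (1 - 2 * ηH) := by
  have hb2 : 2 < b := hb ▸ two_lt_add_inv hR
  have ha2 : 2 < a := ha ▸ mul_inv ζ R ▸ two_lt_add_inv (one_lt_mul_of_lt_of_le hζ hR.le)
  have hη : 0 < ηH := hηH ▸ by positivity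
  have hD : 0 < (a - 2 * cos (π / K)) * (b - 2 * cos (π / K)) := by
    have := cos_le_one (π / K)
    apply mul_pos <;> linarith
  have hcond' := (lt_div_iff₀ hD).1 hcond
  rw [one_div_mul_eq_div, lt_div_iff₀' hη] at hcond'
  have hF0 : F 0 = (a - 2) / (b - 2) * (1 - 2 * ηH) := by
    rw [hF, mul_zero, cos_zero, mul_one, mul_one, ← neg_div_neg_eq, neg_sub, neg_sub]
  have hmax : IsGreatest (F '' Set.Ico 0 (2 * π)) (F 0) :=
    ⟨Set.mem_image_of_mem F ⟨le_rfl, by positivity⟩, Set.forall_mem_image.2 fun ω _ =>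
      (hF ω).trans_le (hF0 ▸ div_mul_one_sub_cos_le ha2.le hb2 hη.le hcond'.le ω)⟩
  exact ⟨hmax.csSup_eq.trans hF0, hF0⟩

/-- PAPR formula (Eq. (35)): under the sufficient condition of Proposition 1,
the supremum of `F` over `[0, 2π)` equals `((a − 2)/(b − 2))·(1 − 2η_H)`,
and this value is attained at `ω = 0`. -/
theorem stmt_1 (K : ℕ) (hK : 2 ≤ K) (R ζ : ℝ) (hR : 1 < R) (hζ : 1 < ζ)
    (ηH a b : ℝ)
    (hηH : ηH = 1 / (R ^ K + R⁻¹ ^ K))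
    (ha : a = ζ * R + ζ⁻¹ * R⁻¹)
    (hb : b = R + R⁻¹)
    (F : ℝ → ℝ)
    (hF : ∀ ω : ℝ, F ω =
      ((2 * Real.cos ω - a) / (2 * Real.cos ω - b)) * (1 - 2 * ηH * Real.cos (K * ω)))
    (hcond : (K : ℝ) ^ 2 <
      (1 / ηH) * ((a - b) * (1 - 2 * ηH)) /
        ((a - 2 * Real.cos (π / K)) * (b - 2 * Real.cos (π / K)))) :
    sSup (F '' Set.Ico (0 : ℝ) (2 * π)) = ((a - 2) / (b - 2)) * (1 - 2 * ηH) ∧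
      F 0 = ((a - 2) / (b - 2)) * (1 - 2 * ηH) :=
  stmt_1_general K R ζ hR hζ ηH a b hηH ha hb F hF hcond
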